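/- Let {σ_n} be an orthonormal Hermitian basis and V Hermitian, and define L_{kℓ} = Tr(V σ_k V σ_ℓ) − (1/2) Tr(V² (σ_k σ_ℓ + σ_ℓ σ_k)). Then L is real symmetric and negative semidefinite. -/

import Mathlib

/-!
With `C k = V σ_k - σ_k V`, expanding and cycling traces gives `L k ℓ = Tr(C k * C ℓ) / 2`.
Since `V` and `σ_k` are Hermitian, `C k` is skew-Hermitian, so
`L k ℓ = -Tr((C k)ᴴ * C ℓ) / 2`: `-L` is half the Gram matrix of the `C k` for the
Hilbert–Schmidt inner product. Symmetry comes from `Tr(C k * C ℓ) = Tr(C ℓ * C k)`, reality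
from the Gram matrix being Hermitian, and negative semidefiniteness from it being positive
semidefinite.
-/

open Matrix
open scoped ComplexOrder

namespace Matrix

variable {n ι 𝕜 : Type*} [Fintype n] [RCLike 𝕜]

theorem PosSemidef.map_re {A : Matrix n n 𝕜} (hA : A.PosSemidef) :
    (A.map RCLike.re).PosSemidef := by
  refine .of_dotProduct_mulVec_nonneg ?_ fun x => ?_
  · ext i j
    simp [← hA.isHermitian.apply i j]
  · set y : n → 𝕜 := fun i => x i
    have hre : star x ⬝ᵥ (A.map RCLike.re *ᵥ x) = RCLike.re (star y ⬝ᵥ (A *ᵥ y)) := by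
      simp [y, dotProduct, mulVec, Finset.mul_sum, map_sum, mul_left_comm]
    rw [hre]
    exact (RCLike.nonneg_iff.mp (hA.dotProduct_mulVec_nonneg y)).1

theorem posSemidef_trace_conjTranspose_mul [Fintype ι] (C : ι → Matrix n n 𝕜) :
    (of fun k ℓ => ((C k)ᴴ * C ℓ).trace).PosSemidef := by
  convert posSemidef_conjTranspose_mul_self (of fun (p : n × n) k => C k p.1 p.2) using 1
  ext k ℓ
  simp only [trace, diag_apply, mul_apply, conjTranspose_apply, RCLike.star_def, of_apply,
    Fintype.sum_prod_type]
  exact Finset.sum_comm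

theorem trace_commutator_mul_commutator {R : Type*} [CommRing R] (V A B : Matrix n n R) :
    ((V * A - A * V) * (V * B - B * V)).trace =
      2 * (V * A * V * B).trace - (V * V * (A * B + B * A)).trace := by
  have h₁ : (V * A * B * V).trace = (V * V * A * B).trace := by
    rw [trace_mul_cycle (V * A) B V, ← Matrix.mul_assoc V V A]
  have h₂ : (A * V * V * B).trace = (V * V * B * A).trace := by
    rw [trace_mul_cycle (V * V) B A, Matrix.mul_assoc A V V]
  have h₃ : (A * V * B * V).trace = (V * A * V * B).trace := by
    rw [trace_mul_cycle (A * V) B V, ← Matrix.mul_assoc V A V]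
  simp only [sub_mul, mul_sub, mul_add, trace_sub, trace_add, ← Matrix.mul_assoc]
  rw [h₁, h₂, h₃]
  ring

theorem IsHermitian.conjTranspose_mul_sub_mul {R : Type*} [CommRing R] [StarRing R]
    {V A : Matrix n n R} (hV : V.IsHermitian) (hA : A.IsHermitian) : (V * A - A * V)ᴴ = -(V * A - A * V) := by
  rw [conjTranspose_sub, conjTranspose_mul, conjTranspose_mul, hV.eq, hA.eq, neg_sub]

end Matrix

theorem stmt_18_general (N : ℕ) (σ : Fin (N ^ 2) → Matrix (Fin N) (Fin N) ℂ)
    (hherm : ∀ n, (σ n).IsHermitian)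
    (V : Matrix (Fin N) (Fin N) ℂ) (hV : V.IsHermitian)
    (L : Fin (N ^ 2) → Fin (N ^ 2) → ℂ)
    (hL : L = fun k ℓ => (V * σ k * V * σ ℓ).trace
      - (1 / 2 : ℂ) * (V * V * (σ k * σ ℓ + σ ℓ * σ k)).trace)
    (Lre : Matrix (Fin (N ^ 2)) (Fin (N ^ 2)) ℝ)
    (hLre : Lre = Matrix.of fun k ℓ => (L k ℓ).re) :
    (∀ k ℓ, (L k ℓ).im = 0) ∧ Lre.IsSymm ∧ (-Lre).PosSemidef := by
  subst hLre
  set C := fun k => V * σ k - σ k * V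
  set G := of fun k ℓ => ((C k)ᴴ * C ℓ).trace
  have hLC : ∀ k ℓ, L k ℓ = (C k * C ℓ).trace / 2 := by
    intro k ℓ
    simp only [hL, C, trace_commutator_mul_commutator]
    ring
  have hLG : ∀ k ℓ, L k ℓ = -G k ℓ / 2 := by
    intro k ℓ
    simp only [hLC, G, C, of_apply, hV.conjTranspose_mul_sub_mul (hherm k), neg_mul, trace_neg,
      neg_neg]
  have hsymm : ∀ k ℓ, L k ℓ = L ℓ k := fun k ℓ => by rw [hLC, hLC, trace_mul_comm]
  have hG : G.PosSemidef := posSemidef_trace_conjTranspose_mul C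
  have hreal : ∀ k ℓ, (L k ℓ).im = 0 := by
    intro k ℓ
    rw [← Complex.conj_eq_iff_im]
    nth_rw 2 [hsymm]
    rw [hLG, hLG, ← hG.isHermitian.apply ℓ k]
    simp [map_ofNat]
  refine ⟨hreal, ?_, ?_⟩
  · ext k ℓ
    simp [hsymm k ℓ]
  · convert hG.map_re.smul (show (0 : ℝ) ≤ 1 / 2 by norm_num) using 1
    ext k ℓ
    simp [hLG]
    ring

/-- For an orthonormal Hermitian basis `{σ_n}` and Hermitian `V`, the matrix
`L_{kℓ} = Tr(V σ_k V σ_ℓ) - (1/2) Tr(V² (σ_k σ_ℓ + σ_ℓ σ_k))` is real, symmetric, and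
negative semidefinite. -/
theorem stmt_18 (N : ℕ) (σ : Fin (N ^ 2) → Matrix (Fin N) (Fin N) ℂ)
    (hherm : ∀ n, (σ n).IsHermitian)
    (horthn : ∀ k ℓ, ((σ k)ᴴ * σ ℓ).trace = if k = ℓ then 1 else 0)
    (V : Matrix (Fin N) (Fin N) ℂ) (hV : V.IsHermitian)
    (L : Fin (N ^ 2) → Fin (N ^ 2) → ℂ)
    (hL : L = fun k ℓ => (V * σ k * V * σ ℓ).trace
      - (1 / 2 : ℂ) * (V * V * (σ k * σ ℓ + σ ℓ * σ k)).trace)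
    (Lre : Matrix (Fin (N ^ 2)) (Fin (N ^ 2)) ℝ)
    (hLre : Lre = Matrix.of fun k ℓ => (L k ℓ).re) :
    (∀ k ℓ, (L k ℓ).im = 0) ∧ Lre.IsSymm ∧ (-Lre).PosSemidef :=
  stmt_18_general N σ hherm V hV L hL Lre hLre
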